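/- Finite-graph DGG estimate: Let Ω be a finite set with measure m, symmetric weights μ, intrinsic pseudo metric ρ of jump size ≤ s > 0, Dirichlet Laplacian Δ_Ω with smallest eigenvalue λ₁. Then for any subsets A, B ⊆ Ω and functions f, g : Ω → ℝ supported in A and B respectively, |⟨e^{tΔ_Ω}f, g⟩_m| ≤ exp(−λ₁t − ζ_s(t, ρ(A,B)))·‖f‖_{ℓ²_m}·‖g‖_{ℓ²_m} for all t > 0, where ρ(A,B) = min_{a∈A, b∈B} ρ(a,b), ⟨f,g⟩_m = ∑_x m_x f(x)g(x), and ζ_s(t,r) = (1/s²)( rs·asinh(rs/t) − √(t²+r²s²) + t ). -/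

import Mathlib

noncomputable def zeta (s t r : ℝ) : ℝ :=
  (1 / s ^ 2) * (r * s * Real.arsinh (r * s / t) - Real.sqrt (t ^ 2 + r ^ 2 * s ^ 2) + t)

/-!
Davies' method. For a weight `ω` and `w = e^ω v`, symmetrizing in `(x, y)` gives
`∑ₓ e^{2ω x} v x ∑_y μ x y (v y - v x) = -E(w) + ∑ₓ ∑_y μ x y w x w y (cosh (ω x - ω y) - 1)`.
If `ω` is `α`-Lipschitz for `ρ`, jumps of size `≤ s` give
`cosh (ω x - ω y) - 1 ≤ ρ(x, y)² (cosh (α s) - 1) / s²`, and `∑_y μ x y ρ(x, y)² ≤ m x` absorbs the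
error term into `‖w‖²`; with `E(w) ≥ λ₁ ‖w‖²` this yields
`⟨e^{2ω} v, Δ v⟩ ≤ c ‖e^ω v‖²` for `c = -λ₁ + (cosh (α s) - 1) / s²`, hence
`‖e^ω e^{tΔ} f‖ ≤ e^{ct} ‖e^ω f‖` by Grönwall. Taking `ω = α ρ(·, A)`, which vanishes on `A` and is
`≥ α ρ(A, B)` on `B`, Cauchy–Schwarz against `e^{-ω} g` bounds the pairing by
`e^{ct - α ρ(A, B)} ‖f‖ ‖g‖`, and optimizing over `α` produces `ζ_s`.
-/

open Finset Real

namespace Real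

theorem sinh_mul_le_mul_sinh {c x : ℝ} (hc₀ : 0 ≤ c) (hc₁ : c ≤ 1) (hx : 0 ≤ x) :
    sinh (c * x) ≤ c * sinh x := by
  let F : ℝ → ℝ := fun y => c * sinh y - sinh (c * y)
  have hF : ∀ y, HasDerivAt F (c * cosh y - cosh (c * y) * c) y := fun y =>
    ((hasDerivAt_sinh y).const_mul c).sub
      ((hasDerivAt_sinh (c * y)).comp y ((hasDerivAt_id y).const_mul c |>.congr_deriv (mul_one c)))
  have hmono : MonotoneOn F (Set.Ici 0) := by
    refine monotoneOn_of_hasDerivWithinAt_nonneg (convex_Ici 0)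
      (fun y _ => (hF y).continuousAt.continuousWithinAt)
      (fun y _ => (hF y).hasDerivWithinAt) fun y hy => ?_
    rw [interior_Ici] at hy
    have : cosh (c * y) ≤ cosh y := by
      rw [cosh_le_cosh, abs_of_nonneg (mul_nonneg hc₀ hy.le), abs_of_nonneg hy.le]
      exact mul_le_of_le_one_left hy.le hc₁
    nlinarith
  simpa [F] using hmono Set.self_mem_Ici hx hx

theorem cosh_sub_one_eq (x : ℝ) : cosh x - 1 = 2 * sinh (x / 2) ^ 2 := by
  nth_rewrite 1 [← mul_div_cancel₀ x two_ne_zero]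
  rw [cosh_two_mul, cosh_sq]
  ring

theorem cosh_mul_sub_one_le {a u s : ℝ} (ha : 0 ≤ a) (hu : 0 ≤ u) (hus : u ≤ s) (hs : 0 < s) :
    cosh (a * u) - 1 ≤ u ^ 2 / s ^ 2 * (cosh (a * s) - 1) := by
  have hsinh : sinh (a * u / 2) ≤ u / s * sinh (a * s / 2) := by
    convert sinh_mul_le_mul_sinh (div_nonneg hu hs.le) ((div_le_one hs).2 hus)
      (by positivity : 0 ≤ a * s / 2) using 2
    field_simp
  have h₀ : 0 ≤ sinh (a * u / 2) := sinh_nonneg_iff.2 (by positivity)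
  rw [cosh_sub_one_eq, cosh_sub_one_eq]
  have := pow_le_pow_left₀ h₀ hsinh 2
  rw [mul_pow, div_pow] at this
  nlinarith

theorem mul_mul_cosh_sub_one_le {a b α u s : ℝ} (hα : 0 ≤ α) (hu : 0 ≤ u) (hus : u ≤ s)
    (hs : 0 < s) (hab : |a - b| ≤ α * u) (p q : ℝ) :
    p * q * (cosh (a - b) - 1) ≤ (cosh (α * s) - 1) / s ^ 2 * (u ^ 2 * ((p ^ 2 + q ^ 2) / 2)) := by
  have hcosh : cosh (a - b) - 1 ≤ u ^ 2 / s ^ 2 * (cosh (α * s) - 1) := by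
    have : cosh (a - b) ≤ cosh (α * u) := by
      rwa [cosh_le_cosh, abs_of_nonneg (mul_nonneg hα hu)]
    linarith [cosh_mul_sub_one_le hα hu hus hs]
  have h₀ : 0 ≤ cosh (a - b) - 1 := sub_nonneg.2 (one_le_cosh _)
  calc p * q * (cosh (a - b) - 1) ≤ (p ^ 2 + q ^ 2) / 2 * (u ^ 2 / s ^ 2 * (cosh (α * s) - 1)) :=
        mul_le_mul (by nlinarith [sq_nonneg (p - q)]) hcosh h₀ (by positivity)
    _ = _ := by ring

theorem exp_sq_mul_add_exp_sq_mul (a b p q : ℝ) :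
    exp a ^ 2 * (p * (q - p)) + exp b ^ 2 * (q * (p - q))
      = -(exp b * q - exp a * p) ^ 2 + 2 * (exp a * p * (exp b * q) * (cosh (a - b) - 1)) := by
  rw [cosh_eq, exp_sub, exp_neg, exp_sub]
  field_simp
  ring

end Real

theorem hasDerivAt_exp_smul_apply {E : Type*} [NormedAddCommGroup E] [NormedSpace ℝ E]
    [CompleteSpace E] (L : E →L[ℝ] E) (f : E) (τ : ℝ) :
    HasDerivAt (fun σ : ℝ => NormedSpace.exp (σ • L) f) (L (NormedSpace.exp (τ • L) f)) τ :=
  (ContinuousLinearMap.apply ℝ E f).hasFDerivAt.comp_hasDerivAt τ (hasDerivAt_exp_smul_const' L τ)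

theorem le_exp_mul_mul_of_hasDerivAt_le {F F' : ℝ → ℝ} {k : ℝ}
    (hF : ∀ τ, HasDerivAt F (F' τ) τ) (hF' : ∀ τ, F' τ ≤ k * F τ) {t : ℝ} (ht : 0 ≤ t) :
    F t ≤ exp (k * t) * F 0 := by
  have hG : ∀ τ, HasDerivAt (fun τ => exp (-k * τ) * F τ) (exp (-k * τ) * (F' τ - k * F τ)) τ :=
    fun τ => ((((hasDerivAt_id τ).const_mul (-k)).exp).mul (hF τ)).congr_deriv <| by
      simp only [id_eq, mul_one]
      ring
  have hanti := antitone_of_hasDerivAt_nonpos hG fun τ =>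
    mul_nonpos_of_nonneg_of_nonpos (exp_pos _).le (sub_nonpos.2 (hF' τ))
  have hGt : exp (-k * t) * F t ≤ F 0 := by simpa using hanti ht
  calc F t = exp (k * t) * (exp (-k * t) * F t) := by
        rw [← mul_assoc, ← exp_add, neg_mul, add_neg_cancel, exp_zero, one_mul]
    _ ≤ exp (k * t) * F 0 := mul_le_mul_of_nonneg_left hGt (exp_pos _).le

namespace WeightedGraph

section infDist

variable {Ω : Type*} {ρ : Ω → Ω → ℝ} {A : Set Ω}

noncomputable def infDist (ρ : Ω → Ω → ℝ) (A : Set Ω) (x : Ω) : ℝ :=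
  sInf {d : ℝ | ∃ a ∈ A, d = ρ x a}

theorem infDist_nonneg (hρnn : ∀ x y, 0 ≤ ρ x y) (x : Ω) : 0 ≤ infDist ρ A x :=
  Real.sInf_nonneg fun _ ⟨a, _, hd⟩ => hd ▸ hρnn x a

theorem infDist_le (hρnn : ∀ x y, 0 ≤ ρ x y) {x a : Ω} (ha : a ∈ A) : infDist ρ A x ≤ ρ x a :=
  csInf_le ⟨0, fun _ ⟨b, _, hd⟩ => hd ▸ hρnn x b⟩ ⟨a, ha, rfl⟩

theorem infDist_eq_zero_of_mem (hρ0 : ∀ x, ρ x x = 0) (hρnn : ∀ x y, 0 ≤ ρ x y) {a : Ω}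
    (ha : a ∈ A) : infDist ρ A a = 0 :=
  le_antisymm (hρ0 a ▸ infDist_le hρnn ha) (infDist_nonneg hρnn a)

theorem infDist_le_add (hρtri : ∀ x y z, ρ x z ≤ ρ x y + ρ y z) (hρnn : ∀ x y, 0 ≤ ρ x y)
    (x y : Ω) : infDist ρ A x ≤ ρ x y + infDist ρ A y := by
  rcases A.eq_empty_or_nonempty with rfl | ⟨a₀, ha₀⟩
  · simp [infDist, hρnn]
  · rw [← sub_le_iff_le_add']
    exact le_csInf ⟨_, a₀, ha₀, rfl⟩ fun _ ⟨a, ha, hd⟩ =>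
      hd ▸ sub_le_iff_le_add'.2 ((infDist_le hρnn ha).trans (hρtri x y a))

theorem abs_infDist_sub_le (hρsym : ∀ x y, ρ x y = ρ y x)
    (hρtri : ∀ x y z, ρ x z ≤ ρ x y + ρ y z) (hρnn : ∀ x y, 0 ≤ ρ x y) (x y : Ω) :
    |infDist ρ A x - infDist ρ A y| ≤ ρ x y :=
  abs_sub_le_iff.2 ⟨by linarith [infDist_le_add (A := A) hρtri hρnn x y],
    by linarith [infDist_le_add (A := A) hρtri hρnn y x, hρsym x y]⟩

theorem sInf_le_infDist (hρsym : ∀ x y, ρ x y = ρ y x) (hρnn : ∀ x y, 0 ≤ ρ x y) {B : Set Ω}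
    {b : Ω} (hb : b ∈ B) : sInf {d : ℝ | ∃ a ∈ A, ∃ b ∈ B, d = ρ a b} ≤ infDist ρ A b := by
  rcases A.eq_empty_or_nonempty with rfl | ⟨a₀, ha₀⟩
  · simp [infDist]
  · have hbdd : BddBelow {d : ℝ | ∃ a ∈ A, ∃ b ∈ B, d = ρ a b} :=
      ⟨0, fun _ ⟨a, _, b, _, hd⟩ => hd ▸ hρnn a b⟩
    exact le_csInf ⟨_, a₀, ha₀, rfl⟩ fun _ ⟨a, ha, hd⟩ =>
      hd ▸ hρsym a b ▸ csInf_le hbdd ⟨a, ha, b, hb, rfl⟩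

end infDist

variable {Ω : Type*} [Fintype Ω]

noncomputable def dirichletForm (μ : Ω → Ω → ℝ) (w : Ω → ℝ) : ℝ :=
  (1 / 2) * ∑ x, ∑ y, μ x y * (w y - w x) ^ 2

theorem dirichletForm_nonneg {μ : Ω → Ω → ℝ} (hμ : ∀ x y, 0 ≤ μ x y) (w : Ω → ℝ) :
    0 ≤ dirichletForm μ w :=
  mul_nonneg (by norm_num) <| sum_nonneg fun x _ => sum_nonneg fun y _ =>
    mul_nonneg (hμ x y) (sq_nonneg _)

theorem sInf_rayleigh_mul_le {m : Ω → ℝ} (hm : ∀ x, 0 < m x) {μ : Ω → Ω → ℝ}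
    (hμ : ∀ x y, 0 ≤ μ x y) (w : Ω → ℝ) :
    sInf {q : ℝ | ∃ g : Ω → ℝ, g ≠ 0 ∧ q = dirichletForm μ g / ∑ x, m x * g x ^ 2}
      * ∑ x, m x * w x ^ 2 ≤ dirichletForm μ w := by
  rcases eq_or_ne w 0 with rfl | hw
  · simpa using dirichletForm_nonneg hμ 0
  have hpos : 0 < ∑ x, m x * w x ^ 2 := by
    obtain ⟨x₀, hx₀⟩ := Function.ne_iff.1 hw
    exact sum_pos' (fun x _ => mul_nonneg (hm x).le (sq_nonneg _))
      ⟨x₀, mem_univ _, mul_pos (hm x₀) (pow_two_pos_of_ne_zero hx₀)⟩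
  have hbdd : BddBelow {q : ℝ | ∃ g : Ω → ℝ, g ≠ 0 ∧ q = dirichletForm μ g / ∑ x, m x * g x ^ 2} :=
    ⟨0, fun _ ⟨g, _, hq⟩ => hq ▸ div_nonneg (dirichletForm_nonneg hμ g)
      (sum_nonneg fun x _ => mul_nonneg (hm x).le (sq_nonneg _))⟩
  exact (le_div_iff₀ hpos).1 (csInf_le hbdd ⟨w, hw, rfl⟩)

theorem sum_sum_swap_of_symm {k : Ω → Ω → ℝ} (hk : ∀ x y, k x y = k y x) (F : Ω → Ω → ℝ) :
    ∑ x, ∑ y, k x y * F x y = ∑ x, ∑ y, k x y * F y x := by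
  rw [sum_comm]
  simp_rw [hk]

theorem two_mul_sum_sum_eq_of_symm {k : Ω → Ω → ℝ} (hk : ∀ x y, k x y = k y x)
    (F : Ω → Ω → ℝ) :
    2 * ∑ x, ∑ y, k x y * F x y = ∑ x, ∑ y, k x y * (F x y + F y x) := by
  simp_rw [mul_add, sum_add_distrib, ← sum_sum_swap_of_symm hk (fun x y => F y x)]
  ring

theorem sum_exp_sq_mul_sum_eq {μ : Ω → Ω → ℝ} (hsym : ∀ x y, μ x y = μ y x) (ω v : Ω → ℝ) :
    ∑ x, exp (ω x) ^ 2 * (v x * ∑ y, μ x y * (v y - v x))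
      = -dirichletForm μ (fun x => exp (ω x) * v x)
        + ∑ x, ∑ y, μ x y * (exp (ω x) * v x * (exp (ω y) * v y) * (cosh (ω x - ω y) - 1)) := by
  have h := two_mul_sum_sum_eq_of_symm hsym fun x y => exp (ω x) ^ 2 * (v x * (v y - v x))
  simp only [exp_sq_mul_add_exp_sq_mul, mul_add, sum_add_distrib, mul_neg, sum_neg_distrib] at h
  have hl : ∑ x, exp (ω x) ^ 2 * (v x * ∑ y, μ x y * (v y - v x))
      = ∑ x, ∑ y, μ x y * (exp (ω x) ^ 2 * (v x * (v y - v x))) := by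
    refine sum_congr rfl fun x _ => ?_
    rw [mul_sum, mul_sum]
    exact sum_congr rfl fun y _ => by ring
  simp only [dirichletForm, mul_left_comm _ (2 : ℝ), ← mul_sum] at h ⊢
  linarith

theorem sum_sum_mul_cosh_sub_one_le {m : Ω → ℝ} {μ ρ : Ω → Ω → ℝ} (hμ : ∀ x y, 0 ≤ μ x y)
    (hsym : ∀ x y, μ x y = μ y x) (hρsym : ∀ x y, ρ x y = ρ y x) (hρnn : ∀ x y, 0 ≤ ρ x y)
    (hint : ∀ x, ∑ y, μ x y * ρ x y ^ 2 ≤ m x) {s : ℝ} (hs : 0 < s)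
    (hjump : ∀ x y, 0 < μ x y → ρ x y ≤ s) {α : ℝ} (hα : 0 ≤ α) {ω : Ω → ℝ}
    (hlip : ∀ x y, 0 < μ x y → |ω x - ω y| ≤ α * ρ x y) (w : Ω → ℝ) :
    ∑ x, ∑ y, μ x y * (w x * w y * (cosh (ω x - ω y) - 1))
      ≤ (cosh (α * s) - 1) / s ^ 2 * ∑ x, m x * w x ^ 2 := by
  set K := (cosh (α * s) - 1) / s ^ 2
  have hK : 0 ≤ K := div_nonneg (sub_nonneg.2 (one_le_cosh _)) (sq_nonneg s)
  have hk : ∀ x y, μ x y * ρ x y ^ 2 = μ y x * ρ y x ^ 2 := fun x y => by rw [hsym, hρsym]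
  have hsymm := two_mul_sum_sum_eq_of_symm hk fun x _ => w x ^ 2
  calc ∑ x, ∑ y, μ x y * (w x * w y * (cosh (ω x - ω y) - 1))
      ≤ ∑ x, ∑ y, μ x y * (K * (ρ x y ^ 2 * ((w x ^ 2 + w y ^ 2) / 2))) := by
        refine sum_le_sum fun x _ => sum_le_sum fun y _ => ?_
        rcases (hμ x y).eq_or_lt with h | h
        · simp [← h]
        · exact mul_le_mul_of_nonneg_left (mul_mul_cosh_sub_one_le hα (hρnn x y) (hjump x y h)
            hs (hlip x y h) _ _) (hμ x y)
    _ = K / 2 * ∑ x, ∑ y, μ x y * ρ x y ^ 2 * (w x ^ 2 + w y ^ 2) := by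
        simp_rw [mul_sum]
        exact sum_congr rfl fun x _ => sum_congr rfl fun y _ => by ring
    _ = K * ∑ x, (∑ y, μ x y * ρ x y ^ 2) * w x ^ 2 := by
        rw [← hsymm, sum_congr rfl fun x _ => (sum_mul _ _ _).symm]
        ring
    _ ≤ K * ∑ x, m x * w x ^ 2 :=
        mul_le_mul_of_nonneg_left (sum_le_sum fun x _ =>
          mul_le_mul_of_nonneg_right (hint x) (sq_nonneg _)) hK

theorem sum_mul_exp_sq_mul_apply_le {m : Ω → ℝ} (hm : ∀ x, 0 < m x) {μ ρ : Ω → Ω → ℝ}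
    (hμ : ∀ x y, 0 ≤ μ x y) (hsym : ∀ x y, μ x y = μ y x) (hρsym : ∀ x y, ρ x y = ρ y x)
    (hρnn : ∀ x y, 0 ≤ ρ x y) (hint : ∀ x, ∑ y, μ x y * ρ x y ^ 2 ≤ m x) {s : ℝ} (hs : 0 < s)
    (hjump : ∀ x y, 0 < μ x y → ρ x y ≤ s) {L : (Ω → ℝ) →L[ℝ] (Ω → ℝ)}
    (hL : ∀ (f : Ω → ℝ) (x : Ω), L f x = (m x)⁻¹ * ∑ y, μ x y * (f y - f x))
    {α : ℝ} (hα : 0 ≤ α) {ω : Ω → ℝ} (hlip : ∀ x y, 0 < μ x y → |ω x - ω y| ≤ α * ρ x y)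
    (v : Ω → ℝ) :
    ∑ x, m x * (exp (ω x) ^ 2 * (v x * L v x))
      ≤ (-sInf {q : ℝ | ∃ g : Ω → ℝ, g ≠ 0 ∧ q = dirichletForm μ g / ∑ x, m x * g x ^ 2}
          + (cosh (α * s) - 1) / s ^ 2) * ∑ x, m x * (exp (ω x) * v x) ^ 2 := by
  have hLv : ∑ x, m x * (exp (ω x) ^ 2 * (v x * L v x))
      = ∑ x, exp (ω x) ^ 2 * (v x * ∑ y, μ x y * (v y - v x)) :=
    sum_congr rfl fun x _ => by
      rw [hL]
      field_simp [(hm x).ne']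
  rw [hLv, sum_exp_sq_mul_sum_eq hsym]
  linarith [sInf_rayleigh_mul_le hm hμ fun x => exp (ω x) * v x,
    sum_sum_mul_cosh_sub_one_le hμ hsym hρsym hρnn hint hs hjump hα hlip fun x => exp (ω x) * v x]

theorem sum_mul_sq_exp_smul_apply_le (m e : Ω → ℝ) (L : (Ω → ℝ) →L[ℝ] (Ω → ℝ)) {c : ℝ}
    (hform : ∀ v : Ω → ℝ, ∑ x, m x * (e x ^ 2 * (v x * L v x)) ≤ c * ∑ x, m x * (e x * v x) ^ 2)
    (f : Ω → ℝ) {t : ℝ} (ht : 0 ≤ t) :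
    ∑ x, m x * (e x * NormedSpace.exp (t • L) f x) ^ 2
      ≤ exp (2 * c * t) * ∑ x, m x * (e x * f x) ^ 2 := by
  let u : ℝ → Ω → ℝ := fun τ => NormedSpace.exp (τ • L) f
  have hder : ∀ τ, HasDerivAt (fun τ => ∑ x, m x * (e x * u τ x) ^ 2)
      (2 * ∑ x, m x * (e x ^ 2 * (u τ x * L (u τ) x))) τ := fun τ => by
    have h := hasDerivAt_pi.1 (hasDerivAt_exp_smul_apply L f τ)
    refine (HasDerivAt.fun_sum fun x _ =>
      (((h x).const_mul (e x)).pow 2).const_mul (m x)).congr_deriv ?_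
    rw [mul_sum]
    exact sum_congr rfl fun x _ => by simp only [u]; ring
  have := le_exp_mul_mul_of_hasDerivAt_le (k := 2 * c) hder (fun τ => by linarith [hform (u τ)]) ht
  simpa [u] using this

theorem abs_sum_mul_mul_le {m : Ω → ℝ} (hm : ∀ x, 0 ≤ m x) (a b : Ω → ℝ) :
    |∑ x, m x * a x * b x| ≤ √(∑ x, m x * a x ^ 2) * √(∑ x, m x * b x ^ 2) := by
  have h := sum_mul_le_sqrt_mul_sqrt univ (fun x => √(m x) * |a x|) (fun x => √(m x) * |b x|)
  simp only [mul_pow, sq_sqrt (hm _), sq_abs] at h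
  refine (abs_sum_le_sum_abs _ _).trans (le_of_eq_of_le (sum_congr rfl fun x _ => ?_) h)
  rw [abs_mul, abs_mul, abs_of_nonneg (hm x)]
  linear_combination (-(|a x| * |b x|)) * mul_self_sqrt (hm x)

theorem abs_sum_mul_exp_smul_apply_mul_le {m : Ω → ℝ} (hm : ∀ x, 0 ≤ m x)
    (L : (Ω → ℝ) →L[ℝ] (Ω → ℝ)) {ω : Ω → ℝ} {c : ℝ}
    (hform : ∀ v : Ω → ℝ, ∑ x, m x * (exp (ω x) ^ 2 * (v x * L v x))
      ≤ c * ∑ x, m x * (exp (ω x) * v x) ^ 2)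
    {A B : Set Ω} {R : ℝ} (hωA : ∀ x ∈ A, ω x = 0) (hωB : ∀ x ∈ B, R ≤ ω x)
    {f g : Ω → ℝ} (hf : ∀ x, x ∉ A → f x = 0) (hg : ∀ x, x ∉ B → g x = 0) {t : ℝ} (ht : 0 ≤ t) :
    |∑ x, m x * NormedSpace.exp (t • L) f x * g x|
      ≤ exp (c * t - R) * √(∑ x, m x * f x ^ 2) * √(∑ x, m x * g x ^ 2) := by
  set u := NormedSpace.exp (t • L) f
  have hf' : ∑ x, m x * (exp (ω x) * f x) ^ 2 = ∑ x, m x * f x ^ 2 :=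
    sum_congr rfl fun x _ => by
      by_cases hx : x ∈ A
      · simp [hωA x hx]
      · simp [hf x hx]
  have hu := sum_mul_sq_exp_smul_apply_le m (fun x => exp (ω x)) L hform f ht
  rw [hf'] at hu
  have hg' : ∑ x, m x * (exp (-ω x) * g x) ^ 2 ≤ exp (-R) ^ 2 * ∑ x, m x * g x ^ 2 := by
    rw [mul_sum]
    refine sum_le_sum fun x _ => ?_
    by_cases hx : x ∈ B
    · have : exp (-ω x) ≤ exp (-R) := exp_le_exp.2 (neg_le_neg (hωB x hx))
      have := pow_le_pow_left₀ (exp_pos _).le this 2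
      nlinarith [mul_nonneg (hm x) (sq_nonneg (g x))]
    · simp [hg x hx]
  have hexp : exp (2 * c * t) = exp (c * t) ^ 2 := by rw [← exp_nat_mul]; ring_nf
  calc |∑ x, m x * u x * g x|
      = |∑ x, m x * (exp (ω x) * u x) * (exp (-ω x) * g x)| := by
        congr 1
        refine sum_congr rfl fun x _ => ?_
        rw [exp_neg]
        field_simp
    _ ≤ √(∑ x, m x * (exp (ω x) * u x) ^ 2) * √(∑ x, m x * (exp (-ω x) * g x) ^ 2) :=
        abs_sum_mul_mul_le hm _ _
    _ ≤ √(exp (c * t) ^ 2 * ∑ x, m x * f x ^ 2) * √(exp (-R) ^ 2 * ∑ x, m x * g x ^ 2) := by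
        rw [← hexp]
        gcongr
    _ = exp (c * t - R) * √(∑ x, m x * f x ^ 2) * √(∑ x, m x * g x ^ 2) := by
        rw [sqrt_mul (sq_nonneg _), sqrt_mul (sq_nonneg _), sqrt_sq (exp_pos _).le,
          sqrt_sq (exp_pos _).le, sub_eq_add_neg, exp_add]
        ring

end WeightedGraph

/-- `α = arsinh (r s / t) / s` maximises `α r - t (cosh (α s) - 1) / s²`, and `zeta s t r` is the
maximum. -/
theorem zeta_eq {s t : ℝ} (hs : 0 < s) (ht : 0 < t) (r : ℝ) :
    zeta s t r
      = arsinh (r * s / t) / s * r - (cosh (arsinh (r * s / t) / s * s) - 1) / s ^ 2 * t := by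
  have hsqrt : √(t ^ 2 + r ^ 2 * s ^ 2) = t * √(1 + (r * s / t) ^ 2) := by
    rw [← sqrt_sq ht.le, ← sqrt_mul (sq_nonneg _), sqrt_sq ht.le]
    congr 1
    field_simp
  rw [div_mul_cancel₀ _ hs.ne', cosh_arsinh, zeta, hsqrt]
  field_simp
  ring

open WeightedGraph in
theorem finite_graph_DGG_general {Ω : Type*} [Fintype Ω]
    (m : Ω → ℝ) (hm : ∀ x, 0 < m x)
    (μ : Ω → Ω → ℝ) (hμ : ∀ x y, 0 ≤ μ x y) (hsym : ∀ x y, μ x y = μ y x)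
    (ρ : Ω → Ω → ℝ) (hρ0 : ∀ x, ρ x x = 0) (hρsym : ∀ x y, ρ x y = ρ y x)
    (hρtri : ∀ x y z, ρ x z ≤ ρ x y + ρ y z) (hρnn : ∀ x y, 0 ≤ ρ x y)
    (hint : ∀ x, ∑ y, μ x y * ρ x y ^ 2 ≤ m x)
    (s : ℝ) (hs : 0 < s) (hjump : ∀ x y, 0 < μ x y → ρ x y ≤ s)
    (L : (Ω → ℝ) →L[ℝ] (Ω → ℝ))
    (hL : ∀ (f : Ω → ℝ) (x : Ω), L f x = (m x)⁻¹ * ∑ y, μ x y * (f y - f x))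
    (lam1 : ℝ)
    (hlam : lam1 = sInf {q : ℝ | ∃ g : Ω → ℝ, g ≠ 0 ∧
        q = ((1 / 2) * ∑ x, ∑ y, μ x y * (g y - g x) ^ 2) / (∑ x, m x * g x ^ 2)})
    (A B : Set Ω)
    (f g : Ω → ℝ) (hf : ∀ x, x ∉ A → f x = 0) (hg : ∀ x, x ∉ B → g x = 0)
    (t : ℝ) (ht : 0 < t) :
    |∑ x, m x * (NormedSpace.exp (t • L)) f x * g x|
      ≤ Real.exp (-lam1 * t - zeta s t (sInf {d : ℝ | ∃ a ∈ A, ∃ b ∈ B, d = ρ a b}))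
        * Real.sqrt (∑ x, m x * f x ^ 2) * Real.sqrt (∑ x, m x * g x ^ 2) := by
  set r := sInf {d : ℝ | ∃ a ∈ A, ∃ b ∈ B, d = ρ a b}
  have hr : 0 ≤ r := Real.sInf_nonneg fun _ ⟨a, _, b, _, hd⟩ => hd ▸ hρnn a b
  rw [zeta_eq hs ht]
  set α := arsinh (r * s / t) / s
  have hα : 0 ≤ α := div_nonneg (arsinh_nonneg_iff.2 (by positivity)) hs.le
  set ω : Ω → ℝ := fun x => α * infDist ρ A x
  have hlip : ∀ x y, 0 < μ x y → |ω x - ω y| ≤ α * ρ x y := fun x y _ => by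
    rw [← mul_sub, abs_mul, abs_of_nonneg hα]
    exact mul_le_mul_of_nonneg_left (abs_infDist_sub_le hρsym hρtri hρnn x y) hα
  have hform : ∀ v : Ω → ℝ, ∑ x, m x * (exp (ω x) ^ 2 * (v x * L v x))
      ≤ (-lam1 + (cosh (α * s) - 1) / s ^ 2) * ∑ x, m x * (exp (ω x) * v x) ^ 2 := by
    rw [hlam]
    exact sum_mul_exp_sq_mul_apply_le hm hμ hsym hρsym hρnn hint hs hjump hL hα hlip
  have hωA : ∀ x ∈ A, ω x = 0 := fun x hx => by simp [ω, infDist_eq_zero_of_mem hρ0 hρnn hx]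
  have hωB : ∀ x ∈ B, α * r ≤ ω x := fun x hx =>
    mul_le_mul_of_nonneg_left (sInf_le_infDist hρsym hρnn hx) hα
  convert abs_sum_mul_exp_smul_apply_mul_le (fun x => (hm x).le) L hform hωA hωB hf hg ht.le using 4
  ring

theorem finite_graph_DGG {Ω : Type*} [Fintype Ω]
    (m : Ω → ℝ) (hm : ∀ x, 0 < m x)
    (μ : Ω → Ω → ℝ) (hμ : ∀ x y, 0 ≤ μ x y) (hsym : ∀ x y, μ x y = μ y x)
    (ρ : Ω → Ω → ℝ) (hρ0 : ∀ x, ρ x x = 0) (hρsym : ∀ x y, ρ x y = ρ y x)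
    (hρtri : ∀ x y z, ρ x z ≤ ρ x y + ρ y z) (hρnn : ∀ x y, 0 ≤ ρ x y)
    (hint : ∀ x, ∑ y, μ x y * ρ x y ^ 2 ≤ m x)
    (s : ℝ) (hs : 0 < s) (hjump : ∀ x y, 0 < μ x y → ρ x y ≤ s)
    (L : (Ω → ℝ) →L[ℝ] (Ω → ℝ))
    (hL : ∀ (f : Ω → ℝ) (x : Ω), L f x = (m x)⁻¹ * ∑ y, μ x y * (f y - f x))
    (lam1 : ℝ)
    (hlam : lam1 = sInf {q : ℝ | ∃ g : Ω → ℝ, g ≠ 0 ∧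
        q = ((1 / 2) * ∑ x, ∑ y, μ x y * (g y - g x) ^ 2) / (∑ x, m x * g x ^ 2)})
    (A B : Set Ω) (hA : A.Nonempty) (hB : B.Nonempty)
    (f g : Ω → ℝ) (hf : ∀ x, x ∉ A → f x = 0) (hg : ∀ x, x ∉ B → g x = 0)
    (t : ℝ) (ht : 0 < t) :
    |∑ x, m x * (NormedSpace.exp (t • L)) f x * g x|
      ≤ Real.exp (-lam1 * t - zeta s t (sInf {d : ℝ | ∃ a ∈ A, ∃ b ∈ B, d = ρ a b}))
        * Real.sqrt (∑ x, m x * f x ^ 2) * Real.sqrt (∑ x, m x * g x ^ 2) :=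
  finite_graph_DGG_general m hm μ hμ hsym ρ hρ0 hρsym hρtri hρnn hint s hs hjump L hL lam1 hlam A B
    f g hf hg t ht
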